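/- Let a, b, c > 0 be real numbers with a + b ≠ c, let γ > −1 be real, and let k, l ∈ ℕ₀ with l ≤ k. Then ∫₀^∞ L_l^{γ}(a t) L_k^{γ}(b t) e^{−c t} t^{γ} dt = [Γ(k+γ+1)/k!] · (c−b)^{k−l} (a+b−c)^{l} / c^{k+γ+1} · P_l^{(k−l, γ)}( 1 − 2 (c−a)(c−b) / (c (c−a−b)) ), where Γ is the Gamma function. -/

import Mathlib

open MeasureTheory

/-- Generalized binomial coefficient `C(t, j) = t(t-1)⋯(t-j+1)/j!`. -/
noncomputable def genChoose (t : ℝ) (j : ℕ) : ℝ :=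
  (∏ i ∈ Finset.range j, (t - (i : ℝ))) / (Nat.factorial j : ℝ)

/-- Laguerre polynomial `L_k^γ(x) = ∑_{j=0}^k (-1)^j C(k+γ, k-j) x^j / j!`. -/
noncomputable def laguerre (γ : ℝ) (k : ℕ) (x : ℝ) : ℝ :=
  ∑ j ∈ Finset.range (k + 1),
    (-1 : ℝ) ^ j * genChoose ((k : ℝ) + γ) (k - j) * x ^ j / (Nat.factorial j : ℝ)

/-- Jacobi polynomial
`P_n^{(α,β)}(x) = ∑_{s=0}^n C(n+α, n-s) C(n+β, s) ((x-1)/2)^s ((x+1)/2)^{n-s}`. -/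
noncomputable def jacobi (α β : ℝ) (n : ℕ) (x : ℝ) : ℝ :=
  ∑ s ∈ Finset.range (n + 1),
    genChoose ((n : ℝ) + α) (n - s) * genChoose ((n : ℝ) + β) s *
      ((x - 1) / 2) ^ s * ((x + 1) / 2) ^ (n - s)

/-!
Expanding both Laguerre polynomials turns the integral into a double sum of Gamma moments
`∫ t ^ (i + j + γ) e^{-ct} = Γ(i + j + γ + 1) / c ^ (i + j + γ + 1)`, and
`Γ(n + γ + 1) = Γ(γ + 1) n! C(n + γ, n)`. By Chu–Vandermonde and the trinomial revision
`C(r, n) C(n, k) = C(r, k) C(r - k, n - k)` (for real `r`), the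
coefficient of `(-a)^i (-b)^j` equals `C(k + γ, k) ∑ₘ C(k, m) C(l + γ, l - m) C(l - m, l - i)
C(k - m, k - j)`. Summing over `i` and `j` with the binomial theorem leaves
`C(k + γ, k) ∑ₘ C(k, m) C(l + γ, l - m) (ab)^m (c - a)^(l - m) (c - b)^(k - m)`, which is the
defining sum of the Jacobi polynomial at the point where `(x - 1)/2 = (c - a)(c - b)/(c(a + b - c))`
and `(x + 1)/2 = ab/(c(a + b - c))`.
-/

open Finset Polynomial

theorem Nat.choose_mul_choose_sub_sub {k j m : ℕ} (hjk : j ≤ k) :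
    k.choose m * (k - m).choose (k - j) = k.choose j * j.choose m := by
  rcases le_or_gt m j with hmj | hmj
  · rw [Nat.choose_mul hmj, Nat.choose_symm_of_eq_add (by omega : k - m = (j - m) + (k - j))]
  · rw [Nat.choose_eq_zero_of_lt hmj, mul_zero]
    rcases le_or_gt m k with hmk | hmk
    · rw [Nat.choose_eq_zero_of_lt (by omega : k - m < k - j), mul_zero]
    · rw [Nat.choose_eq_zero_of_lt hmk, zero_mul]

theorem sum_choose_sub_mul_pow {R : Type*} [CommSemiring R] {n m : ℕ} (hm : m ≤ n) (x y : R) :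
    ∑ i ∈ range (n + 1), ((n - m).choose (n - i) : R) * x ^ i * y ^ (n - i)
      = x ^ m * (x + y) ^ (n - m) := by
  obtain ⟨d, rfl⟩ := Nat.exists_eq_add_of_le hm
  rw [Nat.add_sub_cancel_left, show m + d + 1 = m + (d + 1) by omega, sum_range_add, add_pow,
    mul_sum, sum_eq_zero fun i hi ↦ ?_, zero_add]
  · refine sum_congr rfl fun p hp ↦ ?_
    rw [mem_range] at hp
    rw [show m + d - (m + p) = d - p by omega, Nat.choose_symm (by omega), pow_add]
    ring
  · rw [mem_range] at hi
    rw [Nat.choose_eq_zero_of_lt (by omega)]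
    simp

section BinomialRing

variable {R : Type*} [CommRing R] [BinomialRing R]

theorem ascPochhammer_eval_eq_factorial_mul_choose (r : R) (n : ℕ) :
    (ascPochhammer R n).eval r = n.factorial * Ring.choose (r + n - 1) n := by
  rw [← Ring.multichoose_eq, ← nsmul_eq_mul, Ring.factorial_nsmul_multichoose_eq_ascPochhammer,
    ascPochhammer_smeval_cast, ascPochhammer_smeval_eq_eval]

theorem Ring.choose_mul_choose_sub (r : R) {i l m : ℕ} (hmi : m ≤ i) (hil : i ≤ l) :
    Ring.choose r (l - m) * ((l - m).choose (l - i) : R)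
      = Ring.choose r (l - i) * Ring.choose (r - (l - i : ℕ)) (i - m) := by
  have h := Ring.choose_smul_choose r (show l - i ≤ l - m by omega)
  rw [show l - m - (l - i) = i - m by omega, nsmul_eq_mul] at h
  rw [mul_comm, h]

theorem Ring.natCast_add_choose_eq_sum (r : R) (j i : ℕ) :
    Ring.choose ((j : R) + r) i
      = ∑ m ∈ range (i + 1), (j.choose m : R) * Ring.choose r (i - m) := by
  rw [Ring.add_choose_eq i (Commute.all _ _), Nat.sum_antidiagonal_eq_sum_range_succ_mk]
  simp only [Ring.choose_natCast]

theorem Ring.choose_sub_mul_choose_add (γ : R) {j k : ℕ} (i : ℕ) (hjk : j ≤ k) :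
    Ring.choose ((k : R) + γ) (k - j) * ((i + j).choose i : R) *
        Ring.choose (↑(i + j) + γ) (i + j)
      = Ring.choose ((k : R) + γ) k * (k.choose j : R) * Ring.choose ((j : R) + (γ + i)) i := by
  have h₁ : ((i + j).choose i : R) * Ring.choose (↑(i + j) + γ) (i + j)
      = Ring.choose ((j : R) + (γ + i)) i * Ring.choose (γ + j) j := by
    rw [← nsmul_eq_mul, Ring.choose_smul_choose _ (Nat.le_add_right i j), Nat.add_sub_cancel_left]
    congr 2 <;> push_cast <;> ring
  have h₂ : (k.choose j : R) * Ring.choose ((k : R) + γ) k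
      = Ring.choose ((k : R) + γ) (k - j) * Ring.choose (γ + j) j := by
    rw [← Nat.choose_symm hjk, ← nsmul_eq_mul, Ring.choose_smul_choose _ (Nat.sub_le k j),
      Nat.sub_sub_self hjk, Nat.cast_sub hjk]
    congr 2
    ring
  linear_combination
    Ring.choose ((k : R) + γ) (k - j) * h₁ - Ring.choose ((j : R) + (γ + i)) i * h₂

theorem Ring.choose_mul_choose_mul_choose_add_eq_sum (γ : R) {i j k l : ℕ} (hil : i ≤ l)
    (hjk : j ≤ k) :
    Ring.choose ((l : R) + γ) (l - i) * Ring.choose ((k : R) + γ) (k - j) *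
        ((i + j).choose i : R) * Ring.choose (↑(i + j) + γ) (i + j)
      = Ring.choose ((k : R) + γ) k * ∑ m ∈ range (l + 1), (k.choose m : R) *
          Ring.choose ((l : R) + γ) (l - m) * ((l - m).choose (l - i) : R) *
          ((k - m).choose (k - j) : R) := by
  have hterm : ∀ m ∈ range (i + 1), (k.choose m : R) * Ring.choose ((l : R) + γ) (l - m) *
      ((l - m).choose (l - i) : R) * ((k - m).choose (k - j) : R)
      = (k.choose j : R) * Ring.choose ((l : R) + γ) (l - i) *
          ((j.choose m : R) * Ring.choose (γ + i) (i - m)) := fun m hm ↦ by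
    have hk : (k.choose m : R) * ((k - m).choose (k - j) : R) = k.choose j * j.choose m := by
      rw [← Nat.cast_mul, Nat.choose_mul_choose_sub_sub hjk, Nat.cast_mul]
    have hl := Ring.choose_mul_choose_sub ((l : R) + γ) (Nat.lt_succ_iff.1 (mem_range.1 hm)) hil
    rw [Nat.cast_sub hil, show (l : R) + γ - (l - i) = γ + i by ring] at hl
    linear_combination ((k.choose m : R) * ((k - m).choose (k - j) : R)) * hl +
      Ring.choose ((l : R) + γ) (l - i) * Ring.choose (γ + i) (i - m) * hk
  have hvanish : ∀ m ∈ range (l + 1), m ∉ range (i + 1) → (k.choose m : R) *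
      Ring.choose ((l : R) + γ) (l - m) * ((l - m).choose (l - i) : R) *
      ((k - m).choose (k - j) : R) = 0 := fun m hml hmi ↦ by
    rw [mem_range] at hml hmi
    rw [Nat.choose_eq_zero_of_lt (by omega : l - m < l - i)]
    simp
  rw [← sum_subset (range_subset_range.2 (by omega)) hvanish, sum_congr rfl hterm, ← mul_sum,
    ← Ring.natCast_add_choose_eq_sum]
  linear_combination Ring.choose ((l : R) + γ) (l - i) * Ring.choose_sub_mul_choose_add γ i hjk

theorem Ring.double_sum_choose_eq_jacobi_sum (γ a b c : R) {k l : ℕ} (hlk : l ≤ k) :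
    ∑ i ∈ range (l + 1), ∑ j ∈ range (k + 1),
        Ring.choose ((l : R) + γ) (l - i) * Ring.choose ((k : R) + γ) (k - j) *
          ((i + j).choose i : R) * Ring.choose (↑(i + j) + γ) (i + j) *
          ((-a) ^ i * c ^ (l - i)) * ((-b) ^ j * c ^ (k - j))
      = Ring.choose ((k : R) + γ) k * (c - b) ^ (k - l) * ∑ s ∈ range (l + 1),
          (k.choose (l - s) : R) * Ring.choose ((l : R) + γ) s *
            ((c - a) * (c - b)) ^ s * (a * b) ^ (l - s) := by
  set T : ℕ → R := fun m ↦ Ring.choose ((k : R) + γ) k * (k.choose m : R) *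
    Ring.choose ((l : R) + γ) (l - m)
  calc _ = ∑ i ∈ range (l + 1), ∑ j ∈ range (k + 1), ∑ m ∈ range (l + 1),
          T m * (((l - m).choose (l - i) : R) * (-a) ^ i * c ^ (l - i)) *
            (((k - m).choose (k - j) : R) * (-b) ^ j * c ^ (k - j)) := by
        refine sum_congr rfl fun i hi ↦ sum_congr rfl fun j hj ↦ ?_
        rw [Ring.choose_mul_choose_mul_choose_add_eq_sum γ (Nat.lt_succ_iff.1 (mem_range.1 hi))
          (Nat.lt_succ_iff.1 (mem_range.1 hj)), mul_sum, sum_mul, sum_mul]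
        refine sum_congr rfl fun m _ ↦ ?_
        ring
    _ = ∑ m ∈ range (l + 1), T m *
          (∑ i ∈ range (l + 1), ((l - m).choose (l - i) : R) * (-a) ^ i * c ^ (l - i)) *
          (∑ j ∈ range (k + 1), ((k - m).choose (k - j) : R) * (-b) ^ j * c ^ (k - j)) := by
        simp only [mul_sum, sum_mul]
        rw [sum_comm, sum_congr rfl fun j _ ↦ sum_comm, sum_comm]
    _ = ∑ m ∈ range (l + 1), T m * ((-a) ^ m * (-a + c) ^ (l - m)) *
          ((-b) ^ m * (-b + c) ^ (k - m)) := by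
        refine sum_congr rfl fun m hm ↦ ?_
        rw [mem_range] at hm
        rw [sum_choose_sub_mul_pow (by omega), sum_choose_sub_mul_pow (by omega)]
    _ = _ := by
        rw [mul_sum, ← sum_range_reflect]
        refine sum_congr rfl fun m hm ↦ ?_
        rw [mem_range] at hm
        rw [Nat.add_sub_cancel, show k - (l - m) = (k - l) + m by omega]
        simp only [T, Nat.sub_sub_self (by omega : m ≤ l)]
        have hab : (-a) ^ (l - m) * (-b) ^ (l - m) = (a * b) ^ (l - m) := by
          rw [← mul_pow, neg_mul_neg]
        rw [pow_add, ← hab, mul_pow, neg_add_eq_sub, neg_add_eq_sub]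
        ring

end BinomialRing

theorem genChoose_eq_ringChoose (t : ℝ) (j : ℕ) : genChoose t j = Ring.choose t j := by
  rw [Ring.choose_eq_smul, ← aeval_eq_smeval, aeval_def, eval₂_eq_eval_map, descPochhammer_map,
    descPochhammer_eval_eq_prod_range, smul_eq_mul, genChoose, div_eq_inv_mul]

theorem Real.Gamma_add_nat_eq_mul_ascPochhammer {s : ℝ} (hs : 0 < s) (n : ℕ) :
    Gamma (s + n) = Gamma s * (ascPochhammer ℝ n).eval s := by
  induction n with
  | zero => simp
  | succ n ih =>
    rw [Nat.cast_succ, ← add_assoc, Gamma_add_one (by positivity), ih, ascPochhammer_succ_eval]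
    ring

theorem Real.Gamma_nat_add_add_one {γ : ℝ} (hγ : -1 < γ) (n : ℕ) :
    Gamma (n + γ + 1) = Gamma (γ + 1) * n.factorial * Ring.choose (n + γ) n := by
  rw [show (n : ℝ) + γ + 1 = γ + 1 + n by ring,
    Gamma_add_nat_eq_mul_ascPochhammer (by linarith), ascPochhammer_eval_eq_factorial_mul_choose,
    show γ + 1 + n - 1 = n + γ by ring, mul_assoc]

theorem integrableOn_pow_mul_exp_neg_mul_mul_rpow {c γ : ℝ} (hc : 0 < c) (hγ : -1 < γ)
    (n : ℕ) :
    IntegrableOn (fun t : ℝ ↦ t ^ n * Real.exp (-(c * t)) * t ^ γ) (Set.Ioi 0) := by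
  have hs : -1 < (n : ℝ) + γ := by linarith [n.cast_nonneg (α := ℝ)]
  refine (integrableOn_rpow_mul_exp_neg_mul_rpow hs one_pos hc).congr_fun
    (fun t (ht : 0 < t) ↦ ?_) measurableSet_Ioi
  simp only [Real.rpow_one, Real.rpow_add ht, Real.rpow_natCast, neg_mul]
  ring

theorem integral_pow_mul_exp_neg_mul_mul_rpow {c γ : ℝ} (hc : 0 < c) (hγ : -1 < γ) (n : ℕ) :
    ∫ t in Set.Ioi (0 : ℝ), t ^ n * Real.exp (-(c * t)) * t ^ γ
      = Real.Gamma (n + γ + 1) / c ^ (n + γ + 1) := by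
  have hs : 0 < (n : ℝ) + γ + 1 := by linarith [n.cast_nonneg (α := ℝ)]
  have h := Real.integral_rpow_mul_exp_neg_mul_Ioi hs hc
  rw [one_div, Real.inv_rpow hc.le, inv_mul_eq_div] at h
  rw [← h]
  refine setIntegral_congr_fun measurableSet_Ioi fun t (ht : 0 < t) ↦ ?_
  rw [add_sub_cancel_right, Real.rpow_add ht, Real.rpow_natCast]
  ring

theorem laguerre_mul_eq_sum (γ a t : ℝ) (k : ℕ) :
    laguerre γ k (a * t)
      = ∑ j ∈ range (k + 1),
          Ring.choose ((k : ℝ) + γ) (k - j) * (-a) ^ j / j.factorial * t ^ j := by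
  refine sum_congr rfl fun j _ ↦ ?_
  rw [genChoose_eq_ringChoose, neg_pow, mul_pow]
  ring

theorem integral_laguerre_mul_laguerre_eq_sum {c γ : ℝ} (hc : 0 < c) (hγ : -1 < γ) (a b : ℝ)
    (k l : ℕ) :
    ∫ t in Set.Ioi (0 : ℝ),
        laguerre γ l (a * t) * laguerre γ k (b * t) * Real.exp (-(c * t)) * t ^ γ
      = Real.Gamma (γ + 1) / (c ^ (k + l) * c ^ (γ + 1)) *
          ∑ i ∈ range (l + 1), ∑ j ∈ range (k + 1),
            Ring.choose ((l : ℝ) + γ) (l - i) * Ring.choose ((k : ℝ) + γ) (k - j) *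
              ((i + j).choose i : ℝ) * Ring.choose (↑(i + j) + γ) (i + j) *
              ((-a) ^ i * c ^ (l - i)) * ((-b) ^ j * c ^ (k - j)) := by
  have hexpand : ∀ t, laguerre γ l (a * t) * laguerre γ k (b * t) * Real.exp (-(c * t)) * t ^ γ
      = ∑ i ∈ range (l + 1), ∑ j ∈ range (k + 1),
          Ring.choose ((l : ℝ) + γ) (l - i) * (-a) ^ i / i.factorial *
            (Ring.choose ((k : ℝ) + γ) (k - j) * (-b) ^ j / j.factorial) *
            (t ^ (i + j) * Real.exp (-(c * t)) * t ^ γ) := fun t ↦ by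
    rw [laguerre_mul_eq_sum, laguerre_mul_eq_sum, sum_mul_sum]
    simp only [sum_mul]
    refine sum_congr rfl fun i _ ↦ sum_congr rfl fun j _ ↦ ?_
    rw [pow_add]
    ring
  have hint := integrableOn_pow_mul_exp_neg_mul_mul_rpow hc hγ
  simp only [hexpand, mul_sum]
  rw [integral_finsetSum _ fun i _ ↦ integrable_finsetSum _ fun j _ ↦ (hint _).const_mul _]
  refine sum_congr rfl fun i hi ↦ ?_
  rw [integral_finsetSum _ fun j _ ↦ (hint _).const_mul _]
  refine sum_congr rfl fun j hj ↦ ?_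
  rw [mem_range] at hi hj
  rw [integral_const_mul, integral_pow_mul_exp_neg_mul_mul_rpow hc hγ,
    Real.Gamma_nat_add_add_one hγ, add_assoc, Real.rpow_add hc, Real.rpow_natCast,
    Nat.cast_add_choose, show k + l = (l - i) + (k - j) + (i + j) by omega]
  field_simp
  ring

theorem jacobi_natCast_sub_mul_pow_eq_sum {x w u v : ℝ} (k l : ℕ) (β : ℝ)
    (hu : (x - 1) / 2 * w = u) (hv : (x + 1) / 2 * w = v) :
    w ^ l * jacobi ((k : ℝ) - l) β l x
      = ∑ s ∈ range (l + 1), (k.choose (l - s) : ℝ) * Ring.choose ((l : ℝ) + β) s *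
          u ^ s * v ^ (l - s) := by
  rw [jacobi, mul_sum]
  refine sum_congr rfl fun s hs ↦ ?_
  rw [genChoose_eq_ringChoose, genChoose_eq_ringChoose, add_sub_cancel, Ring.choose_natCast,
    ← hu, ← hv, mul_pow, mul_pow, ← pow_mul_pow_sub w (Nat.lt_succ_iff.1 (mem_range.1 hs))]
  ring

theorem stmt4_general (a b c γ : ℝ) (hc : 0 < c) (habc : a + b ≠ c)
    (hγ : -1 < γ) (k l : ℕ) (hlk : l ≤ k) :
    (∫ t in Set.Ioi (0 : ℝ),
        laguerre γ l (a * t) * laguerre γ k (b * t) * Real.exp (-(c * t)) * t ^ γ)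
      = Real.Gamma ((k : ℝ) + γ + 1) / (Nat.factorial k : ℝ) *
          ((c - b) ^ (k - l) * (a + b - c) ^ l / c ^ ((k : ℝ) + γ + 1)) *
          jacobi ((k : ℝ) - (l : ℝ)) γ l
            (1 - 2 * ((c - a) * (c - b) / (c * (c - a - b)))) := by
  have hw : a + b - c ≠ 0 := sub_ne_zero.2 habc
  have hw' : c - a - b ≠ 0 := fun h ↦ habc (by linarith)
  have hJ := jacobi_natCast_sub_mul_pow_eq_sum
    (x := 1 - 2 * ((c - a) * (c - b) / (c * (c - a - b)))) (w := c * (a + b - c))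
    (u := (c - a) * (c - b)) (v := a * b) k l γ
    (by field_simp; ring) (by field_simp; ring)
  rw [integral_laguerre_mul_laguerre_eq_sum hc hγ,
    Ring.double_sum_choose_eq_jacobi_sum γ a b c hlk, ← hJ, Real.Gamma_nat_add_add_one hγ,
    add_assoc, Real.rpow_add hc (k : ℝ), Real.rpow_natCast, pow_add, mul_pow]
  field_simp

theorem stmt4 (a b c γ : ℝ) (ha : 0 < a) (hb : 0 < b) (hc : 0 < c) (habc : a + b ≠ c)
    (hγ : -1 < γ) (k l : ℕ) (hlk : l ≤ k) :
    (∫ t in Set.Ioi (0 : ℝ),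
        laguerre γ l (a * t) * laguerre γ k (b * t) * Real.exp (-(c * t)) * t ^ γ)
      = Real.Gamma ((k : ℝ) + γ + 1) / (Nat.factorial k : ℝ) *
          ((c - b) ^ (k - l) * (a + b - c) ^ l / c ^ ((k : ℝ) + γ + 1)) *
          jacobi ((k : ℝ) - (l : ℝ)) γ l
            (1 - 2 * ((c - a) * (c - b) / (c * (c - a - b)))) :=
  stmt4_general a b c γ hc habc hγ k l hlk
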